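/- arXiv:math/0511026 — 2 statements merged into one kernel-verified Lean document; each statement's English description precedes it below -/
import Mathlib

section
/- Let B be a Hopf algebra over a field k with invertible antipode. Define B^{r,ad} as B with the left regular B-action b·x = bx and the left co-adjoint coaction ρ(x) = x_{(1)}S^{-1}(x_{(3)}) ⊗ x_{(2)}. Then B^{r,ad} is a stable anti-Yetter-Drinfeld module: (i) x_{(-1)}·x_{(0)} = x for all x ∈ B, and (ii) (b·x)_{(-1)} ⊗ (b·x)_{(0)} = b_{(1)}x_{(-1)}S^{-1}(b_{(3)}) ⊗ b_{(2)}x_{(0)} for all b, x ∈ B. -/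
/- STATEMENT 7: For a Hopf algebra B with invertible antipode, B^{r,ad} (left regular
action b·x = bx, left co-adjoint coaction ρ(x) = x₍₁₎S⁻¹(x₍₃₎) ⊗ x₍₂₎) is a stable
anti-Yetter-Drinfeld module:
(i) x₍₋₁₎·x₍₀₎ = x, and
(ii) (b·x)₍₋₁₎ ⊗ (b·x)₍₀₎ = b₍₁₎x₍₋₁₎S⁻¹(b₍₃₎) ⊗ b₍₂₎x₍₀₎. -/

open TensorProduct

noncomputable section

variable {k : Type*} [Field k] {B : Type*} [Ring B] [HopfAlgebra k B]
variable {X : Type*} [AddCommGroup X] [Module k X]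

/-- Iterated comultiplication `b ↦ b₍₁₎ ⊗ (b₍₂₎ ⊗ b₍₃₎)`. -/
def comul3 : B →ₗ[k] B ⊗[k] (B ⊗[k] B) :=
  (TensorProduct.map (LinearMap.id : B →ₗ[k] B) (Coalgebra.comul (R := k) (A := B)))
    ∘ₗ (Coalgebra.comul (R := k) (A := B))

/-- `b ⊗ x ↦ b₍₁₎ x₍₋₁₎ S'(b₍₃₎) ⊗ b₍₂₎·x₍₀₎`, the right-hand side of the
anti-Yetter-Drinfeld condition. -/
def aydRHS (S' : B →ₗ[k] B) (ρX : X →ₗ[k] B ⊗[k] X) (μX : B ⊗[k] X →ₗ[k] X) :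
    B ⊗[k] X →ₗ[k] B ⊗[k] X :=
  (TensorProduct.map (LinearMap.mul' k B) (LinearMap.id : X →ₗ[k] X))
    ∘ₗ (TensorProduct.assoc k B B X).symm.toLinearMap
    ∘ₗ (TensorProduct.map (LinearMap.mul' k B)
          ((TensorProduct.map S' μX)
            ∘ₗ (TensorProduct.assoc k B B X).toLinearMap
            ∘ₗ (TensorProduct.map (TensorProduct.comm k B B).toLinearMap
                  (LinearMap.id : X →ₗ[k] X))))
    ∘ₗ (TensorProduct.tensorTensorTensorComm k B (B ⊗[k] B) B X).toLinearMap
    ∘ₗ (TensorProduct.map comul3 ρX)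

/-- The left co-adjoint coaction on `B`: `x ↦ x₍₁₎ S'(x₍₃₎) ⊗ x₍₂₎`. -/
def coadjointCoaction (S' : B →ₗ[k] B) : B →ₗ[k] B ⊗[k] B :=
  (TensorProduct.map
      ((LinearMap.mul' k B) ∘ₗ (TensorProduct.map (LinearMap.id : B →ₗ[k] B) S'))
      (LinearMap.id : B →ₗ[k] B))
    ∘ₗ (TensorProduct.assoc k B B B).symm.toLinearMap
    ∘ₗ (TensorProduct.map (LinearMap.id : B →ₗ[k] B)
          (TensorProduct.comm k B B).toLinearMap)
    ∘ₗ comul3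


section AuxiliaryLemmas

open Coalgebra HopfAlgebra

def reprMul {ι κ : Type*} {a b : B} (r : Repr k a ι) (s : Repr k b κ) : Repr k (a * b) (ι × κ) where
  index := r.index ×ˢ s.index
  left p := r.left p.1 * s.left p.2
  right p := r.right p.1 * s.right p.2
  eq := by
    rw [Bialgebra.comul_mul, ← r.eq, ← s.eq, Finset.sum_mul_sum, Finset.sum_product]
    simp [Algebra.TensorProduct.tmul_mul_tmul]

lemma sum_smul_counit {ι : Type*} {a : B} (r : Repr k a ι) :
    ∑ i ∈ r.index, counit (R := k) (r.right i) • r.left i = a := by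
  have h := congrArg (TensorProduct.rid k B) (sum_tmul_counit_eq r)
  simpa only [map_sum, rid_tmul, one_smul] using h

lemma sum_counit_smul {ι : Type*} {a : B} (r : Repr k a ι) :
    ∑ i ∈ r.index, counit (R := k) (r.left i) • r.right i = a := by
  have h := congrArg (TensorProduct.lid k B) (sum_counit_tmul_eq r)
  simpa only [map_sum, lid_tmul, one_smul] using h

def mul3 : B ⊗[k] (B ⊗[k] B) →ₗ[k] B :=
  (LinearMap.mul' k B) ∘ₗ (LinearMap.lTensor B (LinearMap.mul' k B))

@[simp] lemma mul3_tmul (x y z : B) : mul3 (k := k) (x ⊗ₜ (y ⊗ₜ z)) = x * (y * z) := by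
  simp [mul3]

lemma coassoc_sum {ι κ Λ : Type*} (f g h : B →ₗ[k] B) {a : B} (r : Repr k a ι)
    (rR : ∀ i : ι, Repr k (r.right i) Λ) (rL : ∀ i : ι, Repr k (r.left i) κ) :
    ∑ i ∈ r.index, ∑ j ∈ (rR i).index,
      f (r.left i) * (g ((rR i).left j) * h ((rR i).right j))
    = ∑ i ∈ r.index, ∑ j ∈ (rL i).index,
      f ((rL i).left j) * (g ((rL i).right j) * h (r.right i)) := by
  have key := sum_map_tmul_tmul_eq (R := k) f g h a (repr := r) (a₁ := rL) (a₂ := rR)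
  have := congrArg (mul3 (k := k)) key
  simpa only [map_sum, mul3_tmul] using this

lemma collapse₁ (C E : B) {ι : Type*} {c : B} (r : Repr k c ι) :
    ∑ l ∈ r.index, C * ((r.left l * antipode (R := k) (r.right l)) * E)
      = counit (R := k) c • (C * E) := by
  rw [← Finset.mul_sum, ← Finset.sum_mul, sum_mul_antipode_eq_smul r]
  simp [smul_mul_assoc, mul_smul_comm]

lemma collapse₂ (C E : B) {ι : Type*} {c : B} (r : Repr k c ι) :
    ∑ l ∈ r.index, C * ((antipode (R := k) (r.left l) * r.right l) * E)
      = counit (R := k) c • (C * E) := by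
  rw [← Finset.mul_sum, ← Finset.sum_mul, sum_antipode_mul_eq_smul r]
  simp [smul_mul_assoc, mul_smul_comm]

lemma collapse₃ (A D : B) {ι : Type*} {c : B} (r : Repr k c ι) :
    ∑ i ∈ r.index, counit (R := k) (r.right i) • (antipode (R := k) (r.left i * A) * D)
      = antipode (R := k) (c * A) * D := by
  calc ∑ i ∈ r.index, counit (R := k) (r.right i) • (antipode (R := k) (r.left i * A) * D)
      = ∑ i ∈ r.index, antipode (R := k) ((counit (R := k) (r.right i) • r.left i) * A) * D := by
        refine Finset.sum_congr rfl fun i _ => ?_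
        rw [smul_mul_assoc, map_smul, smul_mul_assoc]
    _ = antipode (R := k) ((∑ i ∈ r.index, counit (R := k) (r.right i) • r.left i) * A) * D := by
        rw [← Finset.sum_mul, ← map_sum, ← Finset.sum_mul]
    _ = _ := by rw [sum_smul_counit r]

lemma collapse₃' (A D : B) {ι : Type*} {c : B} (r : Repr k c ι) :
    ∑ i ∈ r.index, counit (R := k) (r.right i) • (antipode (R := k) (A * r.left i) * D)
      = antipode (R := k) (A * c) * D := by
  calc ∑ i ∈ r.index, counit (R := k) (r.right i) • (antipode (R := k) (A * r.left i) * D)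
      = ∑ i ∈ r.index, antipode (R := k) (A * (counit (R := k) (r.right i) • r.left i)) * D := by
        refine Finset.sum_congr rfl fun i _ => ?_
        rw [mul_smul_comm, map_smul, smul_mul_assoc]
    _ = antipode (R := k) (A * (∑ i ∈ r.index, counit (R := k) (r.right i) • r.left i)) * D := by
        rw [← Finset.sum_mul, ← map_sum, ← Finset.mul_sum]
    _ = _ := by rw [sum_smul_counit r]

lemma collapse₅ (D : B) {ι : Type*} {c : B} (r : Repr k c ι) :
    ∑ i ∈ r.index, counit (R := k) (r.left i) • (antipode (R := k) (r.right i) * D)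
      = antipode (R := k) c * D := by
  calc ∑ i ∈ r.index, counit (R := k) (r.left i) • (antipode (R := k) (r.right i) * D)
      = ∑ i ∈ r.index, antipode (R := k) (counit (R := k) (r.left i) • r.right i) * D := by
        refine Finset.sum_congr rfl fun i _ => ?_
        rw [map_smul, smul_mul_assoc]
    _ = _ := by rw [← Finset.sum_mul, ← map_sum, _root_.sum_counit_smul r]

lemma collapse₆ (D : B) {ι : Type*} {c : B} (r : Repr k c ι) :
    ∑ i ∈ r.index, counit (R := k) (r.left i) • (D * antipode (R := k) (r.right i))
      = D * antipode (R := k) c := by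
  calc ∑ i ∈ r.index, counit (R := k) (r.left i) • (D * antipode (R := k) (r.right i))
      = ∑ i ∈ r.index, D * antipode (R := k) (counit (R := k) (r.left i) • r.right i) := by
        refine Finset.sum_congr rfl fun i _ => ?_
        rw [map_smul, mul_smul_comm]
    _ = _ := by rw [← Finset.mul_sum, ← map_sum, _root_.sum_counit_smul r]


lemma antipode_mul_anti (a b : B) :
    antipode (R := k) (a * b) = antipode (R := k) b * antipode (R := k) a := by
  set ra := ℛ k a with hra
  set rb := ℛ k b with hrb
  set raR : ∀ i, Repr k (ra.right i) (B × B) := fun i => ℛ k _ with hraR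
  set raL : ∀ i, Repr k (ra.left i) (B × B) := fun i => ℛ k _ with hraL
  set rbR : ∀ i, Repr k (rb.right i) (B × B) := fun i => ℛ k _ with hrbR
  set rbL : ∀ i, Repr k (rb.left i) (B × B) := fun i => ℛ k _ with hrbL
  -- the quadruple sum, with both comul₃'s right-refined
  have claim1 :
      (∑ i ∈ ra.index, ∑ j ∈ (raR i).index, ∑ m ∈ rb.index, ∑ l ∈ (rbR m).index,
        antipode (R := k) (ra.left i * rb.left m) *
          (((raR i).left j * (rbR m).left l) *
            (antipode (R := k) ((rbR m).right l) * antipode (R := k) ((raR i).right j))))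
      = antipode (R := k) (a * b) := by
    calc
      _ = ∑ i ∈ ra.index, ∑ j ∈ (raR i).index, ∑ m ∈ rb.index, ∑ l ∈ (rbR m).index,
            (antipode (R := k) (ra.left i * rb.left m) * (raR i).left j) *
              (((rbR m).left l * antipode (R := k) ((rbR m).right l)) *
                antipode (R := k) ((raR i).right j)) := by
          refine Finset.sum_congr rfl fun i _ => Finset.sum_congr rfl fun j _ =>
            Finset.sum_congr rfl fun m _ => Finset.sum_congr rfl fun l _ => by noncomm_ring
      _ = ∑ i ∈ ra.index, ∑ j ∈ (raR i).index, ∑ m ∈ rb.index,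
            counit (R := k) (rb.right m) •
              ((antipode (R := k) (ra.left i * rb.left m) * (raR i).left j) *
                antipode (R := k) ((raR i).right j)) := by
          refine Finset.sum_congr rfl fun i _ => Finset.sum_congr rfl fun j _ =>
            Finset.sum_congr rfl fun m _ => collapse₁ _ _ (rbR m)
      _ = ∑ i ∈ ra.index, ∑ j ∈ (raR i).index, ∑ m ∈ rb.index,
            counit (R := k) (rb.right m) •
              (antipode (R := k) (ra.left i * rb.left m) *
                ((raR i).left j * antipode (R := k) ((raR i).right j))) := by
          refine Finset.sum_congr rfl fun i _ => Finset.sum_congr rfl fun j _ =>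
            Finset.sum_congr rfl fun m _ => by rw [mul_assoc]
      _ = ∑ i ∈ ra.index, ∑ j ∈ (raR i).index,
            antipode (R := k) (ra.left i * b) *
              ((raR i).left j * antipode (R := k) ((raR i).right j)) := by
          refine Finset.sum_congr rfl fun i _ => Finset.sum_congr rfl fun j _ =>
            collapse₃' _ _ rb
      _ = ∑ i ∈ ra.index, ∑ j ∈ (raR i).index,
            antipode (R := k) (ra.left i * b) *
              (((raR i).left j * antipode (R := k) ((raR i).right j)) * 1) := by
          refine Finset.sum_congr rfl fun i _ => Finset.sum_congr rfl fun j _ => by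
            rw [mul_one]
      _ = ∑ i ∈ ra.index,
            counit (R := k) (ra.right i) • (antipode (R := k) (ra.left i * b) * 1) := by
          refine Finset.sum_congr rfl fun i _ => collapse₁ _ _ (raR i)
      _ = antipode (R := k) (a * b) * 1 := collapse₃ _ _ ra
      _ = _ := mul_one _
  -- swap the refinement of `b` from right to left, using coassociativity
  have swapb : ∀ A₁ A₂ A₃ : B,
      (∑ m ∈ rb.index, ∑ l ∈ (rbR m).index,
        antipode (R := k) (A₁ * rb.left m) *
          ((A₂ * (rbR m).left l) *
            (antipode (R := k) ((rbR m).right l) * antipode (R := k) A₃)))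
      = ∑ m ∈ rb.index, ∑ l ∈ (rbL m).index,
        antipode (R := k) (A₁ * (rbL m).left l) *
          ((A₂ * (rbL m).right l) *
            (antipode (R := k) (rb.right m) * antipode (R := k) A₃)) := by
    intro A₁ A₂ A₃
    have := coassoc_sum (k := k)
      ((antipode (R := k) (A := B)) ∘ₗ LinearMap.mulLeft k A₁)
      (LinearMap.mulLeft k A₂)
      ((LinearMap.mulRight k (antipode (R := k) A₃)) ∘ₗ (antipode (R := k) (A := B)))
      rb rbR rbL
    simpa only [LinearMap.coe_comp, Function.comp_apply, LinearMap.mulLeft_apply,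
      LinearMap.mulRight_apply] using this
  have claim2 :
      (∑ i ∈ ra.index, ∑ j ∈ (raR i).index, ∑ m ∈ rb.index, ∑ l ∈ (rbL m).index,
        antipode (R := k) (ra.left i * (rbL m).left l) *
          (((raR i).left j * (rbL m).right l) *
            (antipode (R := k) (rb.right m) * antipode (R := k) ((raR i).right j))))
      = ∑ i ∈ ra.index, ∑ j ∈ (raL i).index, ∑ m ∈ rb.index, ∑ l ∈ (rbL m).index,
        antipode (R := k) ((raL i).left j * (rbL m).left l) *
          (((raL i).right j * (rbL m).right l) *
            (antipode (R := k) (rb.right m) * antipode (R := k) (ra.right i))) := by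
    -- swap the refinement of `a`, for fixed (m, l)
    have swapa : ∀ q : (m : rb.ι) × (rbL m).ι, q.1 ∈ rb.index →
        (∑ i ∈ ra.index, ∑ j ∈ (raR i).index,
          antipode (R := k) (ra.left i * (rbL q.1).left q.2) *
            (((raR i).left j * (rbL q.1).right q.2) *
              (antipode (R := k) (rb.right q.1) * antipode (R := k) ((raR i).right j))))
        = ∑ i ∈ ra.index, ∑ j ∈ (raL i).index,
          antipode (R := k) ((raL i).left j * (rbL q.1).left q.2) *
            (((raL i).right j * (rbL q.1).right q.2) *
              (antipode (R := k) (rb.right q.1) * antipode (R := k) (ra.right i))) := by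
      intro q _
      have := coassoc_sum (k := k)
        ((antipode (R := k) (A := B)) ∘ₗ LinearMap.mulRight k ((rbL q.1).left q.2))
        (LinearMap.mulRight k ((rbL q.1).right q.2))
        ((LinearMap.mulLeft k (antipode (R := k) (rb.right q.1))) ∘ₗ
          (antipode (R := k) (A := B)))
        ra raR raL
      simpa only [LinearMap.coe_comp, Function.comp_apply, LinearMap.mulLeft_apply,
        LinearMap.mulRight_apply] using this
    calc
      _ = ∑ p ∈ ra.index.sigma (fun i => (raR i).index),
            ∑ q ∈ rb.index.sigma (fun m => (rbL m).index),
            antipode (R := k) (ra.left p.1 * (rbL q.1).left q.2) *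
              (((raR p.1).left p.2 * (rbL q.1).right q.2) *
                (antipode (R := k) (rb.right q.1) *
                  antipode (R := k) ((raR p.1).right p.2))) := by
          rw [Finset.sum_sigma']
          exact Finset.sum_congr rfl fun p _ => by rw [Finset.sum_sigma']
      _ = ∑ q ∈ rb.index.sigma (fun m => (rbL m).index),
            ∑ p ∈ ra.index.sigma (fun i => (raR i).index),
            antipode (R := k) (ra.left p.1 * (rbL q.1).left q.2) *
              (((raR p.1).left p.2 * (rbL q.1).right q.2) *
                (antipode (R := k) (rb.right q.1) *
                  antipode (R := k) ((raR p.1).right p.2))) := Finset.sum_comm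
      _ = ∑ q ∈ rb.index.sigma (fun m => (rbL m).index),
            ∑ p ∈ ra.index.sigma (fun i => (raL i).index),
            antipode (R := k) ((raL p.1).left p.2 * (rbL q.1).left q.2) *
              (((raL p.1).right p.2 * (rbL q.1).right q.2) *
                (antipode (R := k) (rb.right q.1) *
                  antipode (R := k) (ra.right p.1))) := by
          refine Finset.sum_congr rfl fun q hq => ?_
          rw [Finset.sum_sigma, Finset.sum_sigma]
          exact swapa q (Finset.mem_sigma.mp hq).1
      _ = ∑ p ∈ ra.index.sigma (fun i => (raL i).index),
            ∑ q ∈ rb.index.sigma (fun m => (rbL m).index),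
            antipode (R := k) ((raL p.1).left p.2 * (rbL q.1).left q.2) *
              (((raL p.1).right p.2 * (rbL q.1).right q.2) *
                (antipode (R := k) (rb.right q.1) *
                  antipode (R := k) (ra.right p.1))) := Finset.sum_comm
      _ = _ := by
          symm
          rw [Finset.sum_sigma']
          exact Finset.sum_congr rfl fun p _ => by rw [Finset.sum_sigma']
  have claim3 :
      (∑ i ∈ ra.index, ∑ j ∈ (raL i).index, ∑ m ∈ rb.index, ∑ l ∈ (rbL m).index,
        antipode (R := k) ((raL i).left j * (rbL m).left l) *
          (((raL i).right j * (rbL m).right l) *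
            (antipode (R := k) (rb.right m) * antipode (R := k) (ra.right i))))
      = antipode (R := k) b * antipode (R := k) a := by
    calc
      _ = ∑ i ∈ ra.index, ∑ m ∈ rb.index, ∑ j ∈ (raL i).index, ∑ l ∈ (rbL m).index,
            antipode (R := k) ((raL i).left j * (rbL m).left l) *
              (((raL i).right j * (rbL m).right l) *
                (antipode (R := k) (rb.right m) * antipode (R := k) (ra.right i))) :=
          Finset.sum_congr rfl fun i _ => Finset.sum_comm
      _ = ∑ i ∈ ra.index, ∑ m ∈ rb.index, ∑ j ∈ (raL i).index, ∑ l ∈ (rbL m).index,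
            1 * ((antipode (R := k) ((raL i).left j * (rbL m).left l) *
                ((raL i).right j * (rbL m).right l)) *
              (antipode (R := k) (rb.right m) * antipode (R := k) (ra.right i))) := by
          refine Finset.sum_congr rfl fun i _ => Finset.sum_congr rfl fun m _ =>
            Finset.sum_congr rfl fun j _ => Finset.sum_congr rfl fun l _ => ?_
          noncomm_ring
      _ = ∑ i ∈ ra.index, ∑ m ∈ rb.index,
            counit (R := k) (ra.left i * rb.left m) •
              (1 * (antipode (R := k) (rb.right m) * antipode (R := k) (ra.right i))) := by
          refine Finset.sum_congr rfl fun i _ => Finset.sum_congr rfl fun m _ => ?_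
          have h2 := collapse₂ (k := k) 1
            (antipode (R := k) (rb.right m) * antipode (R := k) (ra.right i))
            (reprMul (raL i) (rbL m))
          simp only [reprMul] at h2
          rw [Finset.sum_product] at h2
          exact h2
      _ = ∑ i ∈ ra.index, counit (R := k) (ra.left i) •
            (∑ m ∈ rb.index, counit (R := k) (rb.left m) •
              (antipode (R := k) (rb.right m) * antipode (R := k) (ra.right i))) := by
          refine Finset.sum_congr rfl fun i _ => ?_
          rw [Finset.smul_sum]
          refine Finset.sum_congr rfl fun m _ => ?_
          rw [Bialgebra.counit_mul, one_mul, mul_smul]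
      _ = ∑ i ∈ ra.index, counit (R := k) (ra.left i) •
            (antipode (R := k) b * antipode (R := k) (ra.right i)) := by
          refine Finset.sum_congr rfl fun i _ => ?_
          rw [collapse₅ _ rb]
      _ = _ := collapse₆ _ ra
  calc antipode (R := k) (a * b)
      = ∑ i ∈ ra.index, ∑ j ∈ (raR i).index, ∑ m ∈ rb.index, ∑ l ∈ (rbR m).index,
        antipode (R := k) (ra.left i * rb.left m) *
          (((raR i).left j * (rbR m).left l) *
            (antipode (R := k) ((rbR m).right l) *
              antipode (R := k) ((raR i).right j))) := claim1.symm
    _ = ∑ i ∈ ra.index, ∑ j ∈ (raR i).index, ∑ m ∈ rb.index, ∑ l ∈ (rbL m).index,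
        antipode (R := k) (ra.left i * (rbL m).left l) *
          (((raR i).left j * (rbL m).right l) *
            (antipode (R := k) (rb.right m) *
              antipode (R := k) ((raR i).right j))) :=
        Finset.sum_congr rfl fun i _ => Finset.sum_congr rfl fun j _ =>
          swapb (ra.left i) ((raR i).left j) ((raR i).right j)
    _ = _ := claim2.trans claim3

lemma antipode_one' : antipode (R := k) (A := B) 1 = 1 := by
  have := mul_antipode_rTensor_comul_apply (R := k) (a := (1 : B))
  simpa [Algebra.TensorProduct.one_def] using this

section Sinv
variable (S' : B →ₗ[k] B)
  (hS'l : S' ∘ₗ (HopfAlgebra.antipode (R := k) (A := B)) = LinearMap.id)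
  (hS'r : (HopfAlgebra.antipode (R := k) (A := B)) ∘ₗ S' = LinearMap.id)

include hS'l in
lemma S_inj : Function.Injective (antipode (R := k) (A := B)) :=
  Function.LeftInverse.injective (g := S') fun x => LinearMap.congr_fun hS'l x

include hS'l hS'r in
lemma S'_mul (a b : B) : S' (a * b) = S' b * S' a := by
  have hr : ∀ y : B, antipode (R := k) (S' y) = y := fun y => by
    simpa using LinearMap.congr_fun hS'r y
  apply S_inj (k := k) S' hS'l
  rw [hr (a * b), antipode_mul_anti, hr a, hr b]

include hS'l hS'r in
lemma S'_coop {ι : Type*} {c : B} (r : Repr k c ι) :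
    ∑ i ∈ r.index, S' (r.right i) * r.left i = counit (R := k) c • 1 := by
  apply S_inj (k := k) S' hS'l
  rw [map_sum, map_smul, antipode_one']
  calc ∑ i ∈ r.index, antipode (R := k) (S' (r.right i) * r.left i)
      = ∑ i ∈ r.index, antipode (R := k) (r.left i) * r.right i := by
        refine Finset.sum_congr rfl fun i _ => ?_
        have hr : antipode (R := k) (S' (r.right i)) = r.right i := by
          simpa using LinearMap.congr_fun hS'r (r.right i)
        rw [antipode_mul_anti, hr]
    _ = counit (R := k) c • 1 := sum_antipode_mul_eq_smul r

end Sinv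

lemma comul3_repr {ι κ : Type*} (a : B) (r : Repr k a ι) (rr : ∀ i, Repr k (r.right i) κ) :
    comul3 (k := k) a = ∑ i ∈ r.index, ∑ j ∈ (rr i).index,
      r.left i ⊗ₜ[k] ((rr i).left j ⊗ₜ[k] (rr i).right j) := by
  rw [comul3, LinearMap.comp_apply, ← r.eq, map_sum]
  refine Finset.sum_congr rfl fun i _ => ?_
  rw [TensorProduct.map_tmul, LinearMap.id_apply, ← (rr i).eq, tmul_sum]

lemma coadjoint_repr {ι κ : Type*} (S' : B →ₗ[k] B) (a : B) (r : Repr k a ι)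
    (rr : ∀ i, Repr k (r.right i) κ) :
    coadjointCoaction (k := k) S' a = ∑ i ∈ r.index, ∑ j ∈ (rr i).index,
      (r.left i * S' ((rr i).right j)) ⊗ₜ[k] (rr i).left j := by
  rw [coadjointCoaction, LinearMap.comp_apply, LinearMap.comp_apply, LinearMap.comp_apply,
    comul3_repr a r rr]
  simp [map_sum, tmul_sum, TensorProduct.sum_tmul]

set_option synthInstance.maxHeartbeats 1000000 in
set_option maxHeartbeats 1000000 in
lemma aydRHS_repr {ι κ ι' κ' : Type*} (S' : B →ₗ[k] B) (b x : B) (rb : Repr k b ι)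
    (rbR : ∀ i, Repr k (rb.right i) κ) (rx : Repr k x ι') (rxR : ∀ i, Repr k (rx.right i) κ') :
    aydRHS (k := k) S' (coadjointCoaction S') (LinearMap.mul' k B) (b ⊗ₜ[k] x)
    = ∑ m ∈ rx.index, ∑ l ∈ (rxR m).index, ∑ i ∈ rb.index, ∑ j ∈ (rbR i).index,
      ((rb.left i * (rx.left m * S' ((rxR m).right l))) * S' ((rbR i).right j)) ⊗ₜ[k]
        ((rbR i).left j * (rxR m).left l) := by
  rw [aydRHS]
  simp only [LinearMap.comp_apply, LinearEquiv.coe_coe, TensorProduct.map_tmul]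
  rw [comul3_repr b rb rbR, coadjoint_repr S' x rx rxR]
  simp only [TensorProduct.sum_tmul, TensorProduct.tmul_sum, map_sum, TensorProduct.map_tmul,
    TensorProduct.tensorTensorTensorComm_tmul, TensorProduct.assoc_tmul,
    TensorProduct.assoc_symm_tmul, TensorProduct.comm_tmul, LinearMap.mul'_apply,
    LinearMap.id_apply, LinearMap.comp_apply, LinearEquiv.coe_coe]

end AuxiliaryLemmas

open Coalgebra HopfAlgebra in
theorem stmt7 (S' : B →ₗ[k] B)
    (hS'l : S' ∘ₗ (HopfAlgebra.antipode (R := k) (A := B)) = LinearMap.id)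
    (hS'r : (HopfAlgebra.antipode (R := k) (A := B)) ∘ₗ S' = LinearMap.id) :
    -- (i) stability
    (LinearMap.mul' k B) ∘ₗ (coadjointCoaction S') = LinearMap.id
    ∧
    -- (ii) the anti-Yetter-Drinfeld condition
    (coadjointCoaction S') ∘ₗ (LinearMap.mul' k B)
      = aydRHS S' (coadjointCoaction S') (LinearMap.mul' k B) := by
  constructor
  · apply LinearMap.ext; intro x
    set r := ℛ k x with hrdef
    set rr : ∀ i, Repr k (r.right i) (B × B) := fun i => ℛ k _ with hrrdef
    rw [LinearMap.comp_apply, coadjoint_repr S' x r rr, map_sum, LinearMap.id_apply]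
    calc ∑ i ∈ r.index, (LinearMap.mul' k B)
            (∑ j ∈ (rr i).index, (r.left i * S' ((rr i).right j)) ⊗ₜ[k] (rr i).left j)
        = ∑ i ∈ r.index, r.left i * ∑ j ∈ (rr i).index, S' ((rr i).right j) * (rr i).left j := by
          refine Finset.sum_congr rfl fun i _ => ?_
          rw [map_sum, Finset.mul_sum]
          exact Finset.sum_congr rfl fun j _ => by rw [LinearMap.mul'_apply, mul_assoc]
      _ = ∑ i ∈ r.index, r.left i * (counit (R := k) (r.right i) • 1) := by
          refine Finset.sum_congr rfl fun i _ => ?_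
          rw [S'_coop S' hS'l hS'r (rr i)]
      _ = ∑ i ∈ r.index, counit (R := k) (r.right i) • r.left i :=
          Finset.sum_congr rfl fun i _ => by rw [mul_smul_comm, mul_one]
      _ = x := sum_smul_counit r
  · apply TensorProduct.ext'; intro b x
    rw [LinearMap.comp_apply, LinearMap.mul'_apply]
    set rb := ℛ k b with hrb
    set rx := ℛ k x with hrx
    set rbR : ∀ i, Repr k (rb.right i) (B × B) := fun i => ℛ k _ with hrbR
    set rxR : ∀ i, Repr k (rx.right i) (B × B) := fun i => ℛ k _ with hrxR
    have hS'm : ∀ u v : B, S' (u * v) = S' v * S' u := S'_mul S' hS'l hS'r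
    rw [coadjoint_repr S' (b * x) (reprMul rb rx) (fun p => reprMul (rbR p.1) (rxR p.2)),
      aydRHS_repr S' b x rb rbR rx rxR]
    simp only [reprMul, Finset.sum_product]
    calc
      ∑ i ∈ rb.index, ∑ m ∈ rx.index, ∑ j ∈ (rbR i).index, ∑ l ∈ (rxR m).index,
          ((rb.left i * rx.left m) * S' ((rbR i).right j * (rxR m).right l)) ⊗ₜ[k]
            ((rbR i).left j * (rxR m).left l)
        = ∑ m ∈ rx.index, ∑ i ∈ rb.index, ∑ j ∈ (rbR i).index, ∑ l ∈ (rxR m).index,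
            ((rb.left i * rx.left m) * S' ((rbR i).right j * (rxR m).right l)) ⊗ₜ[k]
              ((rbR i).left j * (rxR m).left l) := Finset.sum_comm
      _ = ∑ m ∈ rx.index, ∑ i ∈ rb.index, ∑ l ∈ (rxR m).index, ∑ j ∈ (rbR i).index,
            ((rb.left i * rx.left m) * S' ((rbR i).right j * (rxR m).right l)) ⊗ₜ[k]
              ((rbR i).left j * (rxR m).left l) :=
          Finset.sum_congr rfl fun m _ => Finset.sum_congr rfl fun i _ => Finset.sum_comm
      _ = ∑ m ∈ rx.index, ∑ l ∈ (rxR m).index, ∑ i ∈ rb.index, ∑ j ∈ (rbR i).index,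
            ((rb.left i * rx.left m) * S' ((rbR i).right j * (rxR m).right l)) ⊗ₜ[k]
              ((rbR i).left j * (rxR m).left l) :=
          Finset.sum_congr rfl fun m _ => Finset.sum_comm
      _ = ∑ m ∈ rx.index, ∑ l ∈ (rxR m).index, ∑ i ∈ rb.index, ∑ j ∈ (rbR i).index,
            ((rb.left i * (rx.left m * S' ((rxR m).right l))) * S' ((rbR i).right j)) ⊗ₜ[k]
              ((rbR i).left j * (rxR m).left l) := by
          refine Finset.sum_congr rfl fun m _ => Finset.sum_congr rfl fun l _ =>
            Finset.sum_congr rfl fun i _ => Finset.sum_congr rfl fun j _ => ?_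
          rw [hS'm]
          congr 1
          noncomm_ring

end
end

section
/- Let B be a bialgebra over a field k. The trivial left B-module k (via the counit ε) is a projective right (equivalently left, mutatis mutandis) B-module if and only if B admits a normalized right co-integral, i.e., an element σ ∈ B such that σb = ε(b)σ for all b ∈ B and ε(σ) = 1. -/
/-! Via its augmentation `ε`, the trivial module `k` is a quotient of the free module of rank one,
so it is projective iff `ε` has a linear section. Such a section `s` is determined by `t = s 1`;
its linearity says exactly that `t` is an integral (`a t = ε(a) t`), and `ε ∘ s = id` says
`ε(t) = 1`. For `Bᵐᵒᵖ` with the counit these are the normalized right co-integrals of `B`. -/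

open TensorProduct

noncomputable section

variable (k : Type*) [Field k] (B : Type*) [Ring B] [Bialgebra k B]

/-- The counit as a ring homomorphism out of `Bᵐᵒᵖ` (the target `k` is commutative). -/
def counitOp : Bᵐᵒᵖ →+* k :=
  RingHom.fromOpposite (Bialgebra.counitAlgHom k B).toRingHom
    (fun _ _ => mul_comm _ _)

/-- The trivial right `B`-module structure on `k`: `λ · b := ε(b)λ`. -/
def trivialRightModule : Module Bᵐᵒᵖ k := Module.compHom k (counitOp k B)

section Augmentation

variable {R A : Type*} [CommSemiring R] [Semiring A] [Algebra R A] [Module A R]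
  (ε : A →ₐ[R] R)

theorem toSpanSingleton_one_apply_eq_augmentation
    (hε : ∀ (a : A) (r : R), a • r = ε a * r) (a : A) :
    LinearMap.toSpanSingleton A R 1 a = ε a := by
  rw [LinearMap.toSpanSingleton_apply, hε, mul_one]

theorem surjective_toSpanSingleton_one (hε : ∀ (a : A) (r : R), a • r = ε a * r) :
    Function.Surjective (LinearMap.toSpanSingleton A R 1) :=
  fun r => ⟨algebraMap R A r, by
    rw [toSpanSingleton_one_apply_eq_augmentation ε hε, AlgHom.commutes,
      Algebra.algebraMap_self_apply]⟩

theorem LinearMap.map_eq_smul_map_one_of_augmentation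
    (hε : ∀ (a : A) (r : R), a • r = ε a * r) (s : R →ₗ[A] A) (r : R) :
    s r = r • s 1 := by
  calc s r = s (algebraMap R A r • 1) := by
        rw [hε, AlgHom.commutes, Algebra.algebraMap_self_apply, mul_one]
    _ = r • s 1 := by rw [map_smul, smul_eq_mul, Algebra.smul_def]

theorem exists_rightInverse_toSpanSingleton_one_iff
    (hε : ∀ (a : A) (r : R), a • r = ε a * r) :
    (∃ s : R →ₗ[A] A, LinearMap.toSpanSingleton A R 1 ∘ₗ s = LinearMap.id) ↔
      ∃ t : A, (∀ a, a * t = ε a • t) ∧ ε t = 1 := by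
  constructor
  · rintro ⟨s, hs⟩
    refine ⟨s 1, fun a => ?_, ?_⟩
    · calc a * s 1 = s (a • 1) := (map_smul s a 1).symm
        _ = s (ε a) := by rw [hε, mul_one]
        _ = ε a • s 1 := LinearMap.map_eq_smul_map_one_of_augmentation ε hε s _
    · rw [← toSpanSingleton_one_apply_eq_augmentation ε hε, ← LinearMap.comp_apply, hs,
        LinearMap.id_apply]
  · rintro ⟨t, ht, hεt⟩
    refine ⟨{ toFun := fun r => r • t
              map_add' := fun r r' => add_smul r r' t
              map_smul' := fun a r => ?_ }, ?_⟩
    · rw [RingHom.id_apply, hε, mul_comm, mul_smul, ← ht, smul_eq_mul, mul_smul_comm]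
    · ext
      simp [toSpanSingleton_one_apply_eq_augmentation ε hε, hεt]

theorem projective_iff_exists_integral (hε : ∀ (a : A) (r : R), a • r = ε a * r) :
    Module.Projective A R ↔ ∃ t : A, (∀ a, a * t = ε a • t) ∧ ε t = 1 :=
  (Module.Projective.iff_split_of_projective _ (surjective_toSpanSingleton_one ε hε)).trans
    (exists_rightInverse_toSpanSingleton_one_iff ε hε)

end Augmentation

theorem stmt10 :
    (@Module.Projective Bᵐᵒᵖ _ k _ (trivialRightModule k B))
      ↔ ∃ σ : B, (∀ b : B, σ * b = (Coalgebra.counit (R := k) b) • σ)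
          ∧ Coalgebra.counit (R := k) σ = (1 : k) := by
  let _ := trivialRightModule k B
  rw [projective_iff_exists_integral
    ((Bialgebra.counitAlgHom k B).fromOpposite fun _ _ => Commute.all _ _) fun _ _ => rfl,
    MulOpposite.op_surjective.exists]
  simp only [MulOpposite.op_surjective.forall, ← MulOpposite.op_mul, ← MulOpposite.op_smul,
    MulOpposite.op_inj]
  rfl

end
end
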